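/- arXiv:1010.2686 — 3 statements merged into one kernel-verified Lean document; each statement's English description precedes it below -/
import Mathlib

section
/- Let p ≥ 1, let B and C be p×p complex matrices with C invertible, set A = B (C C†) B†, let s = rank B with s ≥ 1, and let μ denote the smallest nonzero eigenvalue of B B†. Then for every k with 1 ≤ k ≤ s, the k-th smallest nonzero eigenvalue of A satisfies λ_{p−s+k}(A) ≥ μ · λ_k(C C†), where for an n×n Hermitian matrix M, λ_1(M) ≤ ⋯ ≤ λ_n(M) denote its eigenvalues in ascending order (so λ_{p−s+k}(A), k = 1,…,s, are exactly the nonzero eigenvalues of A). -/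
/-!
Everything rests on the two halves of the Courant–Fischer principle for the ascending eigenvalues
`λ_{j+1}(M)` of a Hermitian `p × p` matrix: `λ_{j+1}(M) ≥ c` as soon as `⟪x, M x⟫ ≥ c ‖x‖²` on a
subspace of dimension `p - j`, and the eigenvectors of the top `p - j` eigenvalues span such a
subspace for `c = λ_{j+1}(M)`.

Let `E` be such a subspace for `B Bᴴ` and index `i`, and `F` one for `H` and index `j`. Counting
dimensions, `E ⊓ (Bᴴ)⁻¹ F` has dimension at least `p - (i + j)`, and on it
`⟪x, B H Bᴴ x⟫ = ⟪Bᴴ x, H Bᴴ x⟫ ≥ λ_{j+1}(H) ‖Bᴴ x‖² ≥ λ_{j+1}(H) λ_{i+1}(B Bᴴ) ‖x‖²`, whence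
`λ_{i+j+1}(B H Bᴴ) ≥ λ_{i+1}(B Bᴴ) λ_{j+1}(H)`. The theorem is the case `H = C Cᴴ`, `i = p - s`,
`j = k - 1`.
-/

open Matrix
open scoped ComplexOrder

open Classical in
/-- The eigenvalues of a Hermitian complex matrix, sorted in ascending order,
`eigAsc M k` being the `(k+1)`-th smallest eigenvalue (so `eigAsc M (k-1)` is `λ_k`
in the 1-based indexing `λ_1 ≤ λ_2 ≤ ⋯`). Junk value `0` if `M` is not Hermitian
or `k` is out of range. -/
noncomputable def eigAsc {n : Type*} [Fintype n] [DecidableEq n]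
    (M : Matrix n n ℂ) (k : ℕ) : ℝ :=
  if hM : M.IsHermitian then
    ((Finset.univ.val.map hM.eigenvalues).sort (· ≤ ·)).getD k 0
  else 0

open Module
open scoped InnerProductSpace

namespace Submodule

variable {K V W : Type*} [DivisionRing K] [AddCommGroup V] [Module K V] [AddCommGroup W]
  [Module K W] [FiniteDimensional K V] [FiniteDimensional K W]

theorem finrank_add_finrank_le_finrank_add_finrank_inf (s t : Submodule K V) :
    finrank K s + finrank K t ≤ finrank K V + finrank K ↥(s ⊓ t) := by
  rw [← finrank_sup_add_finrank_inf_eq]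
  exact Nat.add_le_add_right (finrank_le _) _

theorem finrank_add_finrank_le_finrank_add_finrank_comap (L : V →ₗ[K] W) (F : Submodule K W) :
    finrank K V + finrank K F ≤ finrank K W + finrank K (F.comap L) := by
  have hker : LinearMap.ker (F.mkQ ∘ₗ L) = F.comap L := by
    rw [LinearMap.ker_comp, ker_mkQ]
  have hrange := finrank_le (LinearMap.range (F.mkQ ∘ₗ L))
  have hrn := (F.mkQ ∘ₗ L).finrank_range_add_finrank_ker
  have hq := F.finrank_quotient_add_finrank
  rw [hker] at hrn
  omega

end Submodule

namespace Matrix.IsHermitian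

section

variable {𝕜 n : Type*} [RCLike 𝕜] [Fintype n] [DecidableEq n] {M : Matrix n n 𝕜}
  (hM : M.IsHermitian)

theorem inner_eigenvectorBasis_toEuclideanLin (x : EuclideanSpace 𝕜 n) (i : n) :
    ⟪hM.eigenvectorBasis i, toEuclideanLin M x⟫_𝕜 =
      hM.eigenvalues i * ⟪hM.eigenvectorBasis i, x⟫_𝕜 := by
  have hv : toEuclideanLin M (hM.eigenvectorBasis i) =
      (hM.eigenvalues i : 𝕜) • hM.eigenvectorBasis i := by
    rw [toLpLin_apply, hM.mulVec_eigenvectorBasis, RCLike.real_smul_eq_coe_smul (K := 𝕜)]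
    rfl
  rw [← isSymmetric_toEuclideanLin_iff.mpr hM, hv, inner_smul_left, RCLike.conj_ofReal]

theorem re_inner_toEuclideanLin_self (x : EuclideanSpace 𝕜 n) :
    RCLike.re ⟪x, toEuclideanLin M x⟫_𝕜 =
      ∑ i, hM.eigenvalues i * ‖⟪hM.eigenvectorBasis i, x⟫_𝕜‖ ^ 2 := by
  rw [← hM.eigenvectorBasis.sum_inner_mul_inner, map_sum]
  refine Finset.sum_congr rfl fun i _ => ?_
  rw [hM.inner_eigenvectorBasis_toEuclideanLin, ← inner_conj_symm, mul_left_comm, RCLike.conj_mul]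
  norm_cast

noncomputable def eigenvectorSpan (S : Finset n) : Submodule 𝕜 (EuclideanSpace 𝕜 n) :=
  Submodule.span 𝕜 (hM.eigenvectorBasis '' S)

theorem finrank_eigenvectorSpan (S : Finset n) :
    finrank 𝕜 (hM.eigenvectorSpan S) = S.card := by
  have hli : LinearIndependent 𝕜 (hM.eigenvectorBasis ∘ ((↑) : S → n)) :=
    hM.eigenvectorBasis.orthonormal.linearIndependent.comp _ Subtype.val_injective
  rw [eigenvectorSpan, Set.image_eq_range, ← Fintype.card_coe S]
  exact finrank_span_eq_card hli

theorem inner_eigenvectorBasis_eq_zero_of_mem {S : Finset n} {x : EuclideanSpace 𝕜 n}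
    (hx : x ∈ hM.eigenvectorSpan S) {i : n} (hi : i ∉ S) :
    ⟪hM.eigenvectorBasis i, x⟫_𝕜 = 0 := by
  rw [eigenvectorSpan, ← hM.eigenvectorBasis.coe_toBasis, Basis.mem_span_image] at hx
  rw [← hM.eigenvectorBasis.repr_apply_apply, ← hM.eigenvectorBasis.coe_toBasis_repr_apply]
  exact Finsupp.notMem_support_iff.mp fun h => hi (hx h)

theorem mul_norm_sq_le_re_inner_of_mem {S : Finset n} {c : ℝ}
    (hS : ∀ i ∈ S, c ≤ hM.eigenvalues i) {x : EuclideanSpace 𝕜 n}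
    (hx : x ∈ hM.eigenvectorSpan S) :
    c * ‖x‖ ^ 2 ≤ RCLike.re ⟪x, toEuclideanLin M x⟫_𝕜 := by
  rw [hM.re_inner_toEuclideanLin_self, ← hM.eigenvectorBasis.sum_sq_norm_inner_right,
    Finset.mul_sum]
  refine Finset.sum_le_sum fun i _ => ?_
  by_cases hi : i ∈ S
  · exact mul_le_mul_of_nonneg_right (hS i hi) (sq_nonneg _)
  · simp [hM.inner_eigenvectorBasis_eq_zero_of_mem hx hi]

theorem re_inner_le_mul_norm_sq_of_mem {S : Finset n} {c : ℝ}
    (hS : ∀ i ∈ S, hM.eigenvalues i ≤ c) {x : EuclideanSpace 𝕜 n}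
    (hx : x ∈ hM.eigenvectorSpan S) :
    RCLike.re ⟪x, toEuclideanLin M x⟫_𝕜 ≤ c * ‖x‖ ^ 2 := by
  rw [hM.re_inner_toEuclideanLin_self, ← hM.eigenvectorBasis.sum_sq_norm_inner_right,
    Finset.mul_sum]
  refine Finset.sum_le_sum fun i _ => ?_
  by_cases hi : i ∈ S
  · exact mul_le_mul_of_nonneg_right (hS i hi) (sq_nonneg _)
  · simp [hM.inner_eigenvectorBasis_eq_zero_of_mem hx hi]

end

section

variable {p : ℕ} {M : Matrix (Fin p) (Fin p) ℂ}

theorem eigAsc_eq_eigenvalues_sort (hM : M.IsHermitian) {j : ℕ} (hj : j < p) :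
    eigAsc M j = hM.eigenvalues (Tuple.sort hM.eigenvalues ⟨j, hj⟩) := by
  have hsort : (Finset.univ.val.map hM.eigenvalues).sort (· ≤ ·) =
      List.ofFn (hM.eigenvalues ∘ Tuple.sort hM.eigenvalues) := by
    rw [← Multiset.map_univ_val_equiv (Tuple.sort hM.eigenvalues), Multiset.map_map,
      Fin.univ_val_map, Multiset.coe_sort]
    exact List.mergeSort_eq_self _ (Tuple.monotone_sort _).sortedLE_ofFn.pairwise
  rw [eigAsc, dif_pos hM, hsort, List.getD_eq_getElem _ _ (by simpa using hj), List.getElem_ofFn]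
  rfl

theorem le_eigAsc_of_le_re_inner (hM : M.IsHermitian) {j : ℕ} (hj : j < p) {c : ℝ}
    (V : Submodule ℂ (EuclideanSpace ℂ (Fin p))) (hV : p - j ≤ finrank ℂ V)
    (h : ∀ x ∈ V, c * ‖x‖ ^ 2 ≤ RCLike.re ⟪x, toEuclideanLin M x⟫_ℂ) :
    c ≤ eigAsc M j := by
  set σ := Tuple.sort hM.eigenvalues
  set U := hM.eigenvectorSpan ((Finset.Iic ⟨j, hj⟩).map σ.toEmbedding)
  have hU : finrank ℂ U = j + 1 := by
    rw [finrank_eigenvectorSpan, Finset.card_map, Fin.card_Iic]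
  have hUle : ∀ x ∈ U, RCLike.re ⟪x, toEuclideanLin M x⟫_ℂ ≤ eigAsc M j * ‖x‖ ^ 2 := by
    refine fun x hx => hM.re_inner_le_mul_norm_sq_of_mem (fun i hi => ?_) hx
    obtain ⟨i, hij, rfl⟩ := Finset.mem_map.mp hi
    rw [hM.eigAsc_eq_eigenvalues_sort hj]
    exact Tuple.monotone_sort hM.eigenvalues (Finset.mem_Iic.mp hij)
  obtain ⟨x, hxU, hxV, hx0⟩ : ∃ x ∈ U, x ∈ V ∧ x ≠ 0 := by
    by_contra! hUV
    have := Submodule.finrank_add_finrank_le_of_disjoint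
      (Submodule.disjoint_def.mpr fun x hxU hxV => hUV x hxU hxV)
    rw [finrank_euclideanSpace_fin] at this
    omega
  exact le_of_mul_le_mul_right ((h x hxV).trans (hUle x hxU)) (by positivity)

theorem exists_finrank_eq_eigAsc_mul_le_re_inner (hM : M.IsHermitian) {j : ℕ} (hj : j < p) :
    ∃ W : Submodule ℂ (EuclideanSpace ℂ (Fin p)), finrank ℂ W = p - j ∧
      ∀ x ∈ W, eigAsc M j * ‖x‖ ^ 2 ≤ RCLike.re ⟪x, toEuclideanLin M x⟫_ℂ := by
  set σ := Tuple.sort hM.eigenvalues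
  refine ⟨hM.eigenvectorSpan ((Finset.Ici ⟨j, hj⟩).map σ.toEmbedding), ?_, fun x hx => ?_⟩
  · rw [finrank_eigenvectorSpan, Finset.card_map, Fin.card_Ici]
  refine hM.mul_norm_sq_le_re_inner_of_mem (fun i hi => ?_) hx
  obtain ⟨i, hji, rfl⟩ := Finset.mem_map.mp hi
  rw [hM.eigAsc_eq_eigenvalues_sort hj]
  exact Tuple.monotone_sort hM.eigenvalues (Finset.mem_Ici.mp hji)

end

end Matrix.IsHermitian

namespace Matrix

variable {𝕜 m n : Type*} [RCLike 𝕜] [Fintype m] [DecidableEq m] [Fintype n] [DecidableEq n]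

theorem inner_toEuclideanLin_mul_mul_conjTranspose (B : Matrix m n 𝕜) (H : Matrix n n 𝕜)
    (x : EuclideanSpace 𝕜 m) :
    ⟪x, toEuclideanLin (B * H * Bᴴ) x⟫_𝕜 =
      ⟪toEuclideanLin Bᴴ x, toEuclideanLin H (toEuclideanLin Bᴴ x)⟫_𝕜 := by
  rw [toEuclideanLin_conjTranspose_eq_adjoint, LinearMap.adjoint_inner_left]
  simp only [toLpLin_mul_same, LinearMap.comp_apply, toEuclideanLin_conjTranspose_eq_adjoint]

theorem re_inner_toEuclideanLin_mul_conjTranspose (B : Matrix m n 𝕜) (x : EuclideanSpace 𝕜 m) :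
    RCLike.re ⟪x, toEuclideanLin (B * Bᴴ) x⟫_𝕜 = ‖toEuclideanLin Bᴴ x‖ ^ 2 := by
  rw [toLpLin_mul_same, LinearMap.comp_apply, ← LinearMap.adjoint_inner_left,
    ← toEuclideanLin_conjTranspose_eq_adjoint, inner_self_eq_norm_sq]

theorem eigAsc_mul_conjTranspose_mul_eigAsc_le {p q : ℕ} (B : Matrix (Fin p) (Fin q) ℂ)
    {H : Matrix (Fin q) (Fin q) ℂ} (hH : H.PosSemidef) {i j : ℕ} (hij : i + j < p)
    (hj : j < q) : eigAsc (B * Bᴴ) i * eigAsc H j ≤ eigAsc (B * H * Bᴴ) (i + j) := by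
  obtain ⟨E, hE, hEq⟩ :=
    (isHermitian_mul_conjTranspose_self B).exists_finrank_eq_eigAsc_mul_le_re_inner
      (Nat.lt_of_add_right_lt hij)
  obtain ⟨F, hF, hFq⟩ := hH.isHermitian.exists_finrank_eq_eigAsc_mul_le_re_inner hj
  set L := toEuclideanLin Bᴴ
  have hdim : p - (i + j) ≤ finrank ℂ ↥(E ⊓ F.comap L) := by
    have hcomap := Submodule.finrank_add_finrank_le_finrank_add_finrank_comap L F
    have hinf := Submodule.finrank_add_finrank_le_finrank_add_finrank_inf E (F.comap L)
    simp only [finrank_euclideanSpace_fin] at hcomap hinf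
    omega
  have hHj : 0 ≤ eigAsc H j := by
    rw [hH.isHermitian.eigAsc_eq_eigenvalues_sort hj]
    exact hH.eigenvalues_nonneg _
  refine (isHermitian_mul_mul_conjTranspose B hH.isHermitian).le_eigAsc_of_le_re_inner hij _
    hdim ?_
  rintro x ⟨hxE, hxF⟩
  calc eigAsc (B * Bᴴ) i * eigAsc H j * ‖x‖ ^ 2
      = eigAsc H j * (eigAsc (B * Bᴴ) i * ‖x‖ ^ 2) := by ring
    _ ≤ eigAsc H j * ‖L x‖ ^ 2 := by
      gcongr
      rw [← re_inner_toEuclideanLin_mul_conjTranspose]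
      exact hEq x hxE
    _ ≤ RCLike.re ⟪L x, toEuclideanLin H (L x)⟫_ℂ := hFq _ hxF
    _ = RCLike.re ⟪x, toEuclideanLin (B * H * Bᴴ) x⟫_ℂ := by
      rw [inner_toEuclideanLin_mul_mul_conjTranspose]

end Matrix

theorem stmt1_general (p : ℕ)
    (B C : Matrix (Fin p) (Fin p) ℂ)
    (s : ℕ) (hs : B.rank = s)
    (μ : ℝ) (hμ : μ = eigAsc (B * Bᴴ) (p - s))
    (k : ℕ) (hk1 : 1 ≤ k) (hks : k ≤ s) :
    μ * eigAsc (C * Cᴴ) (k - 1) ≤ eigAsc (B * (C * Cᴴ) * Bᴴ) (p - s + k - 1) := by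
  have hsp : s ≤ p := hs ▸ B.rank_le_width
  have := eigAsc_mul_conjTranspose_mul_eigAsc_le B (posSemidef_self_mul_conjTranspose C)
    (i := p - s) (j := k - 1) (by omega) (by omega)
  rwa [hμ, show p - s + k - 1 = p - s + (k - 1) by omega]

/-- Part (b) of the eigenvalue lemma: for `A = B (C Cᴴ) Bᴴ` with `C` invertible and
`s = rank B ≥ 1`, the nonzero eigenvalues `λ_{p-s+k}(A)`, `k = 1, …, s`, are bounded
below by `μ · λ_k(C Cᴴ)`, where `μ = λ_{p-s+1}(B Bᴴ)` is the smallest nonzero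
eigenvalue of `B Bᴴ` (eigenvalues in ascending order). -/
theorem stmt1 (p : ℕ) (hp : 1 ≤ p)
    (B C : Matrix (Fin p) (Fin p) ℂ) (hC : IsUnit C)
    (s : ℕ) (hs : B.rank = s) (hs1 : 1 ≤ s)
    (μ : ℝ) (hμ : μ = eigAsc (B * Bᴴ) (p - s))
    (k : ℕ) (hk1 : 1 ≤ k) (hks : k ≤ s) :
    μ * eigAsc (C * Cᴴ) (k - 1) ≤ eigAsc (B * (C * Cᴴ) * Bᴴ) (p - s + k - 1) :=
  stmt1_general p B C s hs μ hμ k hk1 hks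
end

section
/- (Ostrowski-type inequality for positive semidefinite matrices.) Let S be an invertible p×p complex matrix and Ω a positive semidefinite Hermitian p×p complex matrix. Then for every k with 1 ≤ k ≤ p, λ_k(S Ω S†) ≥ λ_1(S S†) · λ_k(Ω). -/
/-!
Courant–Fischer, in two halves: for Hermitian `M` with ascending eigenvalues `λ_k`, some
`k`-dimensional subspace satisfies `x† M x ≤ λ_k(M) ‖x‖²` (the span of the eigenvectors of
`λ_1, …, λ_k`), while every `k`-dimensional subspace contains some `x ≠ 0` with
`λ_k(M) ‖x‖² ≤ x† M x`. Take the first kind of subspace `V` for `S Ω S†`. Since `S†` is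
injective, `S† V` is again `k`-dimensional, so some `x ∈ V` has `S† x ≠ 0` and
`λ_k(Ω) ‖S† x‖² ≤ (S† x)† Ω (S† x) = x† S Ω S† x ≤ λ_k(S Ω S†) ‖x‖²`.
Finally `‖S† x‖² = x† S S† x ≥ λ_1(S S†) ‖x‖²` and `λ_k(Ω) ≥ 0`.
-/

open Matrix
open scoped ComplexOrder

open scoped InnerProductSpace

theorem Multiset.map_univ_val_comp_equiv {α β γ : Type*} [Fintype α] [Fintype β] (e : α ≃ β)
    (f : β → γ) : Finset.univ.val.map (f ∘ e) = Finset.univ.val.map f := by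
  rw [← Multiset.map_map, Multiset.map_univ_val_equiv]

namespace LinearMap.IsSymmetric

variable {𝕜 E : Type*} [RCLike 𝕜] [NormedAddCommGroup E] [InnerProductSpace 𝕜 E]
  [FiniteDimensional 𝕜 E] {T : E →ₗ[𝕜] E} (hT : T.IsSymmetric) {n : ℕ}
  (hn : Module.finrank 𝕜 E = n)

theorem re_inner_apply_self_eq_sum (x : E) :
    RCLike.re ⟪x, T x⟫_𝕜 =
      ∑ i, hT.eigenvalues hn i * ‖(hT.eigenvectorBasis hn).repr x i‖ ^ 2 := by
  rw [← (hT.eigenvectorBasis hn).repr.inner_map_map, PiLp.inner_apply, map_sum]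
  refine Finset.sum_congr rfl fun i _ => ?_
  rw [eigenvectorBasis_apply_self_apply, ← smul_eq_mul, inner_smul_real_right, RCLike.smul_re,
    inner_self_eq_norm_sq]

theorem norm_sq_eq_sum (x : E) :
    ‖x‖ ^ 2 = ∑ i, ‖(hT.eigenvectorBasis hn).repr x i‖ ^ 2 := by
  rw [← (hT.eigenvectorBasis hn).repr.norm_map, EuclideanSpace.norm_sq_eq]

theorem mul_norm_sq_le_re_inner_apply_self {a : ℝ} {x : E}
    (h : ∀ i, (hT.eigenvectorBasis hn).repr x i ≠ 0 → a ≤ hT.eigenvalues hn i) :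
    a * ‖x‖ ^ 2 ≤ RCLike.re ⟪x, T x⟫_𝕜 := by
  rw [hT.norm_sq_eq_sum hn, hT.re_inner_apply_self_eq_sum hn, Finset.mul_sum]
  refine Finset.sum_le_sum fun i _ => ?_
  by_cases hi : (hT.eigenvectorBasis hn).repr x i = 0
  · simp [hi]
  · exact mul_le_mul_of_nonneg_right (h i hi) (sq_nonneg _)

theorem re_inner_apply_self_le_mul_norm_sq {a : ℝ} {x : E}
    (h : ∀ i, (hT.eigenvectorBasis hn).repr x i ≠ 0 → hT.eigenvalues hn i ≤ a) :
    RCLike.re ⟪x, T x⟫_𝕜 ≤ a * ‖x‖ ^ 2 := by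
  rw [hT.norm_sq_eq_sum hn, hT.re_inner_apply_self_eq_sum hn, Finset.mul_sum]
  refine Finset.sum_le_sum fun i _ => ?_
  by_cases hi : (hT.eigenvectorBasis hn).repr x i = 0
  · simp [hi]
  · exact mul_le_mul_of_nonneg_right (h i hi) (sq_nonneg _)

theorem exists_mem_ne_zero_eigenvalues_mul_norm_sq_le (i : Fin n) (V : Submodule 𝕜 E)
    (hV : n ≤ i + Module.finrank 𝕜 V) :
    ∃ x ∈ V, x ≠ 0 ∧ hT.eigenvalues hn i * ‖x‖ ^ 2 ≤ RCLike.re ⟪x, T x⟫_𝕜 := by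
  let b := hT.eigenvectorBasis hn
  -- `V` has more dimensions than there are eigenvectors of index `> i`, so some nonzero `x ∈ V`
  -- has no component along any of them.
  let φ : V →ₗ[𝕜] (Finset.Ioi i → 𝕜) :=
    LinearMap.pi fun j => (LinearMap.proj (j : Fin n)).comp
      ((WithLp.linearEquiv 2 𝕜 (Fin n → 𝕜)).toLinearMap ∘ₗ b.repr.toLinearMap ∘ₗ V.subtype)
  have hφ : LinearMap.ker φ ≠ ⊥ := LinearMap.ker_ne_bot_of_finrank_lt <| by
    rw [Module.finrank_fintype_fun_eq_card, Fintype.card_coe, Fin.card_Ioi]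
    omega
  obtain ⟨⟨x, hxV⟩, hx, hx0⟩ := Submodule.exists_mem_ne_zero_of_ne_bot hφ
  refine ⟨x, hxV, fun h => hx0 (Subtype.ext h),
    hT.mul_norm_sq_le_re_inner_apply_self hn fun j hj => ?_⟩
  refine hT.eigenvalues_antitone hn (not_lt.mp fun hij => hj ?_)
  simpa [φ, b] using congrFun (LinearMap.mem_ker.mp hx) ⟨j, Finset.mem_Ioi.mpr hij⟩

theorem exists_submodule_re_inner_apply_self_le (i : Fin n) :
    ∃ V : Submodule 𝕜 E, n ≤ i + Module.finrank 𝕜 V ∧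
      ∀ x ∈ V, RCLike.re ⟪x, T x⟫_𝕜 ≤ hT.eigenvalues hn i * ‖x‖ ^ 2 := by
  let b := (hT.eigenvectorBasis hn).toBasis
  refine ⟨Submodule.span 𝕜 (b '' ↑(Finset.Ici i)), ?_, fun x hx => ?_⟩
  · rw [Set.image_eq_range, finrank_span_eq_card (b := fun j : (Finset.Ici i : Set (Fin n)) => b j)
      (b.linearIndependent.comp _ Subtype.val_injective)]
    simp only [Finset.coe_sort_coe, Fintype.card_coe, Fin.card_Ici]
    omega
  · refine hT.re_inner_apply_self_le_mul_norm_sq hn fun j hj => hT.eigenvalues_antitone hn ?_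
    have hj' : j ∈ (b.repr x).support := by simpa [b] using hj
    simpa using b.mem_span_image.mp hx hj'

end LinearMap.IsSymmetric

namespace Matrix

theorem inner_toEuclideanLin_conjTranspose_left {𝕜 m n : Type*} [RCLike 𝕜] [Fintype m]
    [Fintype n] [DecidableEq m] [DecidableEq n] (A : Matrix m n 𝕜) (x : EuclideanSpace 𝕜 m)
    (y : EuclideanSpace 𝕜 n) :
    ⟪toEuclideanLin Aᴴ x, y⟫_𝕜 = ⟪x, toEuclideanLin A y⟫_𝕜 := by
  rw [toEuclideanLin_conjTranspose_eq_adjoint, LinearMap.adjoint_inner_left]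

theorem toEuclideanLin_injective_of_isUnit {𝕜 n : Type*} [RCLike 𝕜] [Fintype n] [DecidableEq n]
    {A : Matrix n n 𝕜} (hA : IsUnit A) : Function.Injective (toEuclideanLin A) :=
  fun _ _ h => WithLp.ofLp_injective 2 (mulVec_injective_iff_isUnit.mpr hA congr(WithLp.ofLp $h))

variable {n : Type*} [Fintype n] [DecidableEq n] {M : Matrix n n ℂ}

namespace IsHermitian

theorem sort_eigenvalues_eq_ofFn (hM : M.IsHermitian) :
    (Finset.univ.val.map hM.eigenvalues).sort (· ≤ ·) =
      List.ofFn (hM.eigenvalues₀ ∘ Fin.rev) := by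
  have hperm : Finset.univ.val.map hM.eigenvalues =
      ↑(List.ofFn (hM.eigenvalues₀ ∘ Fin.rev)) := by
    rw [← Fin.univ_val_map]
    exact (Multiset.map_univ_val_comp_equiv _ _).trans
      (Multiset.map_univ_val_comp_equiv Fin.revPerm _).symm
  rw [hperm, Multiset.coe_sort]
  apply List.mergeSort_of_pairwise
  simp only [decide_eq_true_eq]
  exact (List.sortedLE_ofFn_iff.mpr (hM.eigenvalues₀_antitone.comp Fin.rev_anti)).pairwise

theorem eigAsc_eq_eigenvalues₀ (hM : M.IsHermitian) {k : ℕ} (hk : k < Fintype.card n) :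
    eigAsc M k = hM.eigenvalues₀ (Fin.rev ⟨k, hk⟩) := by
  rw [eigAsc, dif_pos hM, hM.sort_eigenvalues_eq_ofFn,
    List.getD_eq_getElem _ _ (by simpa using hk)]
  simp

theorem eigAsc_zero_le_eigenvalues₀ (hM : M.IsHermitian) (i : Fin (Fintype.card n)) :
    eigAsc M 0 ≤ hM.eigenvalues₀ i := by
  rw [hM.eigAsc_eq_eigenvalues₀ (Fin.pos i)]
  exact hM.eigenvalues₀_antitone (Fin.le_iff_val_le_val.mpr (by simp only [Fin.val_rev]; omega))

theorem eigAsc_zero_mul_norm_sq_le (hM : M.IsHermitian) (x : EuclideanSpace ℂ n) :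
    eigAsc M 0 * ‖x‖ ^ 2 ≤ RCLike.re ⟪x, toEuclideanLin M x⟫_ℂ :=
  (isSymmetric_toEuclideanLin_iff.mpr hM).mul_norm_sq_le_re_inner_apply_self _
    fun i _ => hM.eigAsc_zero_le_eigenvalues₀ i

theorem exists_mem_ne_zero_eigAsc_mul_norm_sq_le (hM : M.IsHermitian) {k : ℕ}
    (hk : k < Fintype.card n) (V : Submodule ℂ (EuclideanSpace ℂ n))
    (hV : k < Module.finrank ℂ V) :
    ∃ x ∈ V, x ≠ 0 ∧ eigAsc M k * ‖x‖ ^ 2 ≤ RCLike.re ⟪x, toEuclideanLin M x⟫_ℂ := by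
  rw [hM.eigAsc_eq_eigenvalues₀ hk]
  exact (isSymmetric_toEuclideanLin_iff.mpr hM).exists_mem_ne_zero_eigenvalues_mul_norm_sq_le _ _
    V (by simp only [Fin.val_rev]; omega)

theorem exists_submodule_re_inner_le_eigAsc_mul_norm_sq (hM : M.IsHermitian) {k : ℕ}
    (hk : k < Fintype.card n) :
    ∃ V : Submodule ℂ (EuclideanSpace ℂ n), k < Module.finrank ℂ V ∧
      ∀ x ∈ V, RCLike.re ⟪x, toEuclideanLin M x⟫_ℂ ≤ eigAsc M k * ‖x‖ ^ 2 := by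
  rw [hM.eigAsc_eq_eigenvalues₀ hk]
  obtain ⟨V, hV, hle⟩ := LinearMap.IsSymmetric.exists_submodule_re_inner_apply_self_le
    (isSymmetric_toEuclideanLin_iff.mpr hM) _ (Fin.rev ⟨k, hk⟩)
  exact ⟨V, by simp only [Fin.val_rev] at hV; omega, hle⟩

end IsHermitian

theorem PosSemidef.eigAsc_nonneg (hM : M.PosSemidef) (k : ℕ) : 0 ≤ eigAsc M k := by
  rw [eigAsc, dif_pos hM.1, List.getD_eq_getElem?_getD]
  cases h : ((Finset.univ.val.map hM.1.eigenvalues).sort (· ≤ ·))[k]? with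
  | none => rfl
  | some a =>
    obtain ⟨i, -, rfl⟩ :=
      Multiset.mem_map.mp ((Multiset.mem_sort _).mp (List.mem_of_getElem? h))
    exact hM.eigenvalues_nonneg i

end Matrix

/-- Ostrowski-type inequality for positive semidefinite matrices: for `S` invertible
and `Ω` positive semidefinite Hermitian, `λ_k(S Ω Sᴴ) ≥ λ_1(S Sᴴ) · λ_k(Ω)` for
`1 ≤ k ≤ p` (eigenvalues in ascending order). -/
theorem stmt2 (p : ℕ) (S Ω : Matrix (Fin p) (Fin p) ℂ)
    (hS : IsUnit S) (hΩ : Ω.PosSemidef)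
    (k : ℕ) (hk1 : 1 ≤ k) (hkp : k ≤ p) :
    eigAsc (S * Sᴴ) 0 * eigAsc Ω (k - 1) ≤ eigAsc (S * Ω * Sᴴ) (k - 1) := by
  have hk : k - 1 < Fintype.card (Fin p) := by rw [Fintype.card_fin]; omega
  obtain ⟨V, hV, h_upper⟩ :=
    (hΩ.mul_mul_conjTranspose_same S).1.exists_submodule_re_inner_le_eigAsc_mul_norm_sq hk
  have hL : Function.Injective (toEuclideanLin Sᴴ) := toEuclideanLin_injective_of_isUnit hS.star
  obtain ⟨_, ⟨x, hxV, rfl⟩, hx, h_lower⟩ := hΩ.1.exists_mem_ne_zero_eigAsc_mul_norm_sq_le hk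
    (V.map (toEuclideanLin Sᴴ)) (by rwa [← (V.equivMapOfInjective _ hL).finrank_eq])
  have hx0 : x ≠ 0 := by rintro rfl; exact hx (map_zero _)
  have h_form : ⟪toEuclideanLin Sᴴ x, toEuclideanLin Ω (toEuclideanLin Sᴴ x)⟫_ℂ =
      ⟪x, toEuclideanLin (S * Ω * Sᴴ) x⟫_ℂ := by
    rw [inner_toEuclideanLin_conjTranspose_left]
    simp
  have h_norm : ‖toEuclideanLin Sᴴ x‖ ^ 2 = RCLike.re ⟪x, toEuclideanLin (S * Sᴴ) x⟫_ℂ := by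
    rw [← inner_self_eq_norm_sq (𝕜 := ℂ), inner_toEuclideanLin_conjTranspose_left]
    simp
  have h_min := (posSemidef_self_mul_conjTranspose S).1.eigAsc_zero_mul_norm_sq_le x
  have hΩk : 0 ≤ eigAsc Ω (k - 1) := hΩ.eigAsc_nonneg _
  refine le_of_mul_le_mul_right ?_ (pow_pos (norm_pos_iff.mpr hx0) 2)
  calc eigAsc (S * Sᴴ) 0 * eigAsc Ω (k - 1) * ‖x‖ ^ 2
      = eigAsc Ω (k - 1) * (eigAsc (S * Sᴴ) 0 * ‖x‖ ^ 2) := by ring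
    _ ≤ eigAsc Ω (k - 1) * ‖toEuclideanLin Sᴴ x‖ ^ 2 := by rw [h_norm]; gcongr
    _ ≤ RCLike.re ⟪x, toEuclideanLin (S * Ω * Sᴴ) x⟫_ℂ := by rwa [← h_form]
    _ ≤ eigAsc (S * Ω * Sᴴ) (k - 1) * ‖x‖ ^ 2 := h_upper x hxV
end

section
/- Fix N ≥ 1 and let ω = exp(2πi/N). Given matrices H_0, …, H_{N−1} ∈ ℂ^{n_r×n_t}, let C_H be the block circulant matrix whose (j,k)-th n_r×n_t block is H_{(k−j) mod N}, and for 0 ≤ n ≤ N−1 set Δ_n = Σ_{l=0}^{N−1} ω^{nl} H_l. Then for every real c ≥ 0: det(I_{Nn_r} + c · C_H C_H†) = ∏_{n=0}^{N−1} det(I_{n_r} + c · Δ_n Δ_n†). -/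
/-!
The normalized DFT matrix `V = (ω^(jk) / √N)` is unitary, and its columns are eigenvectors of
every cyclic shift `S_l` (the permutation matrix of `j ↦ j + l`): `S_l V = V · diag(ω^(kl))`.
Writing `C_H = ∑_l S_l ⊗ H_l` and conjugating by `V ⊗ I` therefore turns `C_H` into
`∑_l diag(ω^(kl)) ⊗ H_l`, which after swapping the two factors of the index set is block
diagonal with blocks `Δ_k`. The quantity `det (1 + c • A * Aᴴ)` is unchanged by `A ↦ U * A * W`
for unitary `U`, `W` and by reindexing, and it is multiplicative over block-diagonal `A`.
-/

open Matrix Complex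
open scoped Kronecker ComplexConjugate

section UnitaryInvariance

variable {m n R : Type*} [Fintype m] [DecidableEq m] [Fintype n] [CommRing R] [StarRing R]

theorem det_one_add_smul_mul_conjTranspose_unitary_mul_unitary [DecidableEq n] {U : Matrix m m R}
    {W : Matrix n n R} (hU : U ∈ unitaryGroup m R) (hW : W ∈ unitaryGroup n R)
    (A : Matrix m n R) (c : R) :
    det (1 + c • (U * A * W * (U * A * W)ᴴ)) = det (1 + c • (A * Aᴴ)) := by
  have hUU : U * Uᴴ = 1 := mem_unitaryGroup_iff.mp hU
  have hUU' : Uᴴ * U = 1 := mem_unitaryGroup_iff'.mp hU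
  have hWW : W * Wᴴ = 1 := mem_unitaryGroup_iff.mp hW
  have hconj : 1 + c • (U * A * W * (U * A * W)ᴴ) = U * (1 + c • (A * Aᴴ)) * Uᴴ := by
    simp only [conjTranspose_mul, Matrix.mul_add, Matrix.add_mul, Matrix.mul_one,
      Matrix.mul_smul, Matrix.smul_mul, Matrix.mul_assoc, hUU]
    simp only [← Matrix.mul_assoc W, hWW, Matrix.one_mul]
  rw [hconj, det_conj_of_mul_eq_one hUU hUU']

theorem det_one_add_smul_mul_conjTranspose_submatrix {m' n' : Type*} [Fintype m']
    [DecidableEq m'] [Fintype n'] (A : Matrix m n R) (e : m' ≃ m) (f : n' ≃ n) (c : R) :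
    det (1 + c • (A.submatrix e f * (A.submatrix e f)ᴴ)) = det (1 + c • (A * Aᴴ)) := by
  rw [conjTranspose_submatrix, submatrix_mul_equiv, ← det_submatrix_equiv_self e (1 + _)]
  congr 1
  ext
  simp [one_apply, e.injective.eq_iff]

theorem det_one_add_smul_blockDiagonal_mul_conjTranspose {o : Type*} [Fintype o]
    [DecidableEq o] (M : o → Matrix m n R) (c : R) :
    det (1 + c • (blockDiagonal M * (blockDiagonal M)ᴴ)) =
      ∏ k, det (1 + c • (M k * (M k)ᴴ)) := by
  rw [blockDiagonal_conjTranspose, ← blockDiagonal_mul, ← blockDiagonal_smul,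
    ← blockDiagonal_one, ← blockDiagonal_add, det_blockDiagonal]
  rfl

end UnitaryInvariance

section BlockCirculant

variable {G m n α : Type*} [AddCommGroup G]

def blockCirculant (H : G → Matrix m n α) : Matrix (G × m) (G × n) α :=
  of fun p q => H (q.1 - p.1) p.2 q.2

theorem blockCirculant_eq_sum_permMatrix_kronecker [Fintype G] [DecidableEq G] [Semiring α]
    (H : G → Matrix m n α) :
    blockCirculant H = ∑ l, (Equiv.addRight l).permMatrix α ⊗ₖ H l := by
  ext ⟨j, a⟩ ⟨k, b⟩
  simp only [blockCirculant, of_apply, Matrix.sum_apply, kroneckerMap_apply, PEquiv.toMatrix_apply,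
    Equiv.toPEquiv_apply, Equiv.coe_addRight, Option.mem_def, Option.some.injEq, ite_mul, one_mul,
    zero_mul]
  have hsingle : ∀ l, l ≠ k - j → (if j + l = k then H l a b else 0) = 0 :=
    fun l hl => if_neg fun h => hl (eq_sub_of_add_eq' h)
  simp only [Fintype.sum_eq_single (k - j) hsingle, add_sub_cancel, if_true]

theorem sum_diagonal_kronecker {ι o : Type*} [Fintype ι] [DecidableEq o] [Semiring α]
    (d : ι → o → α) (B : ι → Matrix m n α) :
    ∑ i, diagonal (d i) ⊗ₖ B i =
      (blockDiagonal fun k => ∑ i, d i k • B i).submatrix (Equiv.prodComm _ _)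
        (Equiv.prodComm _ _) := by
  ext ⟨j, a⟩ ⟨k, b⟩
  simp only [Matrix.sum_apply, kroneckerMap_apply, diagonal_apply, ite_mul, zero_mul,
    Finset.sum_ite_irrel, Finset.sum_const_zero, submatrix_apply, Equiv.prodComm_apply,
    Prod.swap_prod_mk, blockDiagonal_apply, Matrix.smul_apply, smul_eq_mul]

end BlockCirculant

section DFT

variable {N : ℕ} [NeZero N] {ω : ℂ}

noncomputable def unitaryDFT (N : ℕ) (ω : ℂ) : Matrix (Fin N) (Fin N) ℂ :=
  of fun j k => ω ^ ((j : ℕ) * k) / (Real.sqrt N : ℂ)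

theorem IsPrimitiveRoot.sum_pow_mul_conj_pow (hω : IsPrimitiveRoot ω N) (j k : Fin N) :
    ∑ q : Fin N, ω ^ ((j : ℕ) * q) * conj (ω ^ ((k : ℕ) * q)) = if j = k then (N : ℂ) else 0 := by
  have hω0 : ω ≠ 0 := hω.ne_zero (NeZero.ne N)
  have hconj : conj ω = ω⁻¹ := (inv_eq_conj (hω.norm'_eq_one (NeZero.ne N))).symm
  set z := ω ^ (j : ℕ) * (ω ^ (k : ℕ))⁻¹
  have hterm : ∀ q : ℕ, ω ^ ((j : ℕ) * q) * conj (ω ^ ((k : ℕ) * q)) = z ^ q := fun q => by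
    rw [map_pow, hconj, mul_pow, inv_pow, pow_mul, pow_mul, inv_pow]
  simp only [hterm, Fin.sum_univ_eq_sum_range (z ^ ·) N]
  split_ifs with hjk
  · simp [z, hjk, hω0]
  · have hz : z ≠ 1 := fun h => hjk <| Fin.ext <|
      hω.pow_inj j.2 k.2 ((mul_inv_eq_one₀ (pow_ne_zero _ hω0)).mp h)
    have hzN : z ^ N = 1 := by
      rw [mul_pow, inv_pow, ← pow_mul, ← pow_mul, mul_comm (j : ℕ), mul_comm (k : ℕ), pow_mul,
        pow_mul, hω.pow_eq_one, one_pow, one_pow, inv_one, mul_one]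
    exact (mul_eq_zero.mp ((geom_sum_mul z N).trans (by rw [hzN, sub_self]))).resolve_right
      (sub_ne_zero.mpr hz)

theorem unitaryDFT_mem_unitaryGroup (hω : IsPrimitiveRoot ω N) :
    unitaryDFT N ω ∈ unitaryGroup (Fin N) ℂ := by
  have hsqrt : (Real.sqrt N : ℂ) * Real.sqrt N = N := by
    rw [← ofReal_mul, Real.mul_self_sqrt (Nat.cast_nonneg _), ofReal_natCast]
  rw [mem_unitaryGroup_iff]
  ext j k
  simp only [mul_apply, star_apply, unitaryDFT, of_apply, RCLike.star_def, map_div₀, conj_ofReal,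
    div_mul_div_comm, ← Finset.sum_div, hω.sum_pow_mul_conj_pow, one_apply, hsqrt]
  split_ifs
  · exact div_self (Nat.cast_ne_zero.mpr (NeZero.ne N))
  · exact zero_div _

theorem permMatrix_addRight_mul_unitaryDFT (hω : ω ^ N = 1) (l : Fin N) :
    (Equiv.addRight l).permMatrix ℂ * unitaryDFT N ω =
      unitaryDFT N ω * diagonal fun k : Fin N => ω ^ ((k : ℕ) * l) := by
  have hmod : ∀ x k : ℕ, ω ^ (x % N * k) = ω ^ (x * k) := fun x k => by
    conv_rhs => rw [← Nat.mod_add_div x N]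
    rw [add_mul, pow_add, mul_assoc, pow_mul ω N, hω, one_pow, mul_one]
  rw [PEquiv.toMatrix_toPEquiv_mul]
  ext j k
  simp only [mul_diagonal, submatrix_apply, unitaryDFT, of_apply, Equiv.coe_addRight, id,
    Fin.val_add, hmod]
  rw [add_mul, pow_add, mul_comm (l : ℕ)]
  ring

theorem blockCirculant_eq_unitaryDFT_kronecker_conj {m n : Type*} [Fintype m] [DecidableEq m]
    [Fintype n] [DecidableEq n] (hω : IsPrimitiveRoot ω N) (H : Fin N → Matrix m n ℂ) :
    blockCirculant H = (unitaryDFT N ω ⊗ₖ (1 : Matrix m m ℂ)) *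
      (∑ l : Fin N, (diagonal fun k : Fin N => ω ^ ((k : ℕ) * l)) ⊗ₖ H l) *
        (unitaryDFT N ω ⊗ₖ (1 : Matrix n n ℂ))ᴴ := by
  have hV := mem_unitaryGroup_iff.mp (unitaryDFT_mem_unitaryGroup hω)
  rw [blockCirculant_eq_sum_permMatrix_kronecker, Matrix.mul_sum, Matrix.sum_mul]
  refine Finset.sum_congr rfl fun l _ => ?_
  rw [conjTranspose_kronecker, conjTranspose_one, ← mul_kronecker_mul, ← mul_kronecker_mul,
    Matrix.one_mul, Matrix.mul_one, ← permMatrix_addRight_mul_unitaryDFT hω.pow_eq_one,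
    Matrix.mul_assoc, ← star_eq_conjTranspose, hV, Matrix.mul_one]

end DFT

theorem stmt6_general (N nr nt : ℕ) (hN : 1 ≤ N)
    (H : Fin N → Matrix (Fin nr) (Fin nt) ℂ)
    (ω : ℂ) (hω : ω = Complex.exp (2 * Real.pi * Complex.I / N))
    (CH : Matrix (Fin N × Fin nr) (Fin N × Fin nt) ℂ)
    (hCH : ∀ (j k : Fin N) (a : Fin nr) (b : Fin nt), CH (j, a) (k, b) = H (k - j) a b)
    (Δ : Fin N → Matrix (Fin nr) (Fin nt) ℂ)
    (hΔ : ∀ n : Fin N, Δ n = ∑ l : Fin N, ω ^ ((n : ℕ) * (l : ℕ)) • H l)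
    (c : ℝ) :
    ((1 : Matrix (Fin N × Fin nr) (Fin N × Fin nr) ℂ) + (c : ℂ) • (CH * CHᴴ)).det =
      ∏ n : Fin N, ((1 : Matrix (Fin nr) (Fin nr) ℂ) + (c : ℂ) • (Δ n * (Δ n)ᴴ)).det := by
  have : NeZero N := ⟨by omega⟩
  have hprim : IsPrimitiveRoot ω N := hω ▸ Complex.isPrimitiveRoot_exp N (NeZero.ne N)
  have hCH' : CH = blockCirculant H := by
    ext ⟨j, a⟩ ⟨k, b⟩
    exact hCH j k a b
  have hU {m : ℕ} : unitaryDFT N ω ⊗ₖ (1 : Matrix (Fin m) (Fin m) ℂ) ∈ unitaryGroup _ ℂ :=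
    kronecker_mem_unitary (unitaryDFT_mem_unitaryGroup hprim) (one_mem _)
  have hUH {m : ℕ} : (unitaryDFT N ω ⊗ₖ (1 : Matrix (Fin m) (Fin m) ℂ))ᴴ ∈ unitaryGroup _ ℂ :=
    Unitary.star_mem hU
  rw [hCH', blockCirculant_eq_unitaryDFT_kronecker_conj hprim,
    det_one_add_smul_mul_conjTranspose_unitary_mul_unitary hU hUH,
    sum_diagonal_kronecker, det_one_add_smul_mul_conjTranspose_submatrix,
    det_one_add_smul_blockDiagonal_mul_conjTranspose]
  simp only [hΔ]

/-- Determinant factorization for the block circulant channel: with `ω = exp(2πi/N)`,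
`C_H` the block circulant matrix with `(j,k)`-th `n_r × n_t` block `H_((k-j) mod N)`,
and `Δ_n = Σ_l ω^(nl) H_l`, for every real `c ≥ 0`:
`det(I + c · C_H C_Hᴴ) = ∏_n det(I + c · Δ_n Δ_nᴴ)`. -/
theorem stmt6 (N nr nt : ℕ) (hN : 1 ≤ N)
    (H : Fin N → Matrix (Fin nr) (Fin nt) ℂ)
    (ω : ℂ) (hω : ω = Complex.exp (2 * Real.pi * Complex.I / N))
    (CH : Matrix (Fin N × Fin nr) (Fin N × Fin nt) ℂ)
    (hCH : ∀ (j k : Fin N) (a : Fin nr) (b : Fin nt), CH (j, a) (k, b) = H (k - j) a b)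
    (Δ : Fin N → Matrix (Fin nr) (Fin nt) ℂ)
    (hΔ : ∀ n : Fin N, Δ n = ∑ l : Fin N, ω ^ ((n : ℕ) * (l : ℕ)) • H l)
    (c : ℝ) (hc : 0 ≤ c) :
    ((1 : Matrix (Fin N × Fin nr) (Fin N × Fin nr) ℂ) + (c : ℂ) • (CH * CHᴴ)).det =
      ∏ n : Fin N, ((1 : Matrix (Fin nr) (Fin nr) ℂ) + (c : ℂ) • (Δ n * (Δ n)ᴴ)).det :=
  stmt6_general N nr nt hN H ω hω CH hCH Δ hΔ c
end
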